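/- arXiv:1310.3412 — 6 statements merged into one kernel-verified Lean document; each statement's English description precedes it below -/
import Mathlib

section
/- Let w be a modular cone metric on X and let e ∈ int P. Then the function W^e : (0,∞) × X × X → [0,∞) defined by W^e_λ(x,y) = ξ_e(w_{λe}(x,y)) is a modular metric on X: (i) for given x, y ∈ X, W^e_λ(x,y) = 0 for all λ > 0 iff x = y; (ii) W^e_λ(x,y) = W^e_λ(y,x) for all λ > 0 and x, y ∈ X; (iii) W^e_{λ+μ}(x,y) ≤ W^e_λ(x,z) + W^e_μ(z,y) for all x, y, z ∈ X and λ, μ > 0. -/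
/-!
For a closed salient cone `P` and `e ∈ int P`, the scalarization `ξ_e` is finite and attained on
`P` (`ξ_e(v) • e - v ∈ P`), monotone and subadditive there, and vanishes on `P` only at `0`.
A modular cone metric takes values in `P` (triangle inequality for `x, x` through `y` with
`c₁ = c₂ = c`), and it vanishes at `(x, y)` as soon as it does at every `λ • e`: for small `t > 0`
the point `c - t • e` is still interior, and the triangle inequality for `c = (c - t • e) + t • e`
through `x` gives `-w_c(x, y) ∈ P`. Hence (i)–(iii) for `w` pass through `ξ_e`. When `e = 0` the
space is `{0}` and `ξ_e` is the junk value `sInf univ = 0`.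
-/

open Filter Topology

section

variable {E : Type*} [AddCommGroup E] [Module ℝ E]

namespace PointedCone

variable {C : PointedCone ℝ E} {c e v : E}

section Interior

variable [TopologicalSpace E]

open scoped Pointwise in
theorem smul_mem_interior [ContinuousConstSMul ℝ E] {t : ℝ} (ht : 0 < t)
    (hc : c ∈ interior (C : Set E)) : t • c ∈ interior (C : Set E) := by
  have hsub : t • (C : Set E) ⊆ (C : Set E) :=
    Set.smul_set_subset_iff.2 fun _ hx => C.smul_mem ht.le hx
  refine interior_mono hsub ?_
  rw [interior_smul₀ ht.ne']
  exact Set.smul_mem_smul_set hc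

variable [IsTopologicalAddGroup E] [ContinuousSMul ℝ E]

theorem _root_.exists_pos_sub_smul_mem_interior {s : Set E} (hc : c ∈ interior s) (v : E) :
    ∃ t : ℝ, 0 < t ∧ c - t • v ∈ interior s := by
  have hcont : Continuous fun t : ℝ => c - t • v := by fun_prop
  have hlim : Tendsto (fun t : ℝ => c - t • v) (𝓝 0) (𝓝 c) := by
    simpa using hcont.tendsto 0
  exact (hlim.eventually (isOpen_interior.mem_nhds hc)).exists_gt

theorem exists_smul_sub_mem_of_mem_interior (he : e ∈ interior (C : Set E)) (v : E) :
    ∃ r : ℝ, r • e - v ∈ C := by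
  obtain ⟨t, ht, hmem⟩ := exists_pos_sub_smul_mem_interior he v
  refine ⟨t⁻¹, ?_⟩
  have hscaled := C.smul_mem (inv_pos.2 ht).le (interior_subset hmem)
  rwa [smul_sub, smul_smul, inv_mul_cancel₀ ht.ne', one_smul] at hscaled

theorem subsingleton_of_zero_mem_interior (hC : (C : ConvexCone ℝ E).Salient)
    (h0 : (0 : E) ∈ interior (C : Set E)) : Subsingleton E := by
  refine subsingleton_of_forall_eq 0 fun v => ?_
  obtain ⟨_, hneg⟩ := exists_smul_sub_mem_of_mem_interior h0 v
  obtain ⟨_, hpos⟩ := exists_smul_sub_mem_of_mem_interior h0 (-v)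
  rw [smul_zero, zero_sub] at hneg hpos
  rw [neg_neg] at hpos
  by_contra hv
  exact hC v hpos hv hneg

end Interior

theorem nonneg_of_smul_sub_mem (hC : (C : ConvexCone ℝ E).Salient) (he : e ∈ C) (he0 : e ≠ 0)
    (hv : v ∈ C) {r : ℝ} (hr : r • e - v ∈ C) : 0 ≤ r := by
  by_contra! hneg
  have hre : r • e ∈ C := by simpa using C.add_mem hr hv
  have hre_neg : -(r • e) ∈ C := by simpa using C.smul_mem (neg_nonneg.2 hneg.le) he
  exact hC _ hre (smul_ne_zero hneg.ne he0) hre_neg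

end PointedCone

open PointedCone

/-- The nonlinear scalarization `ξ_e`. -/
noncomputable def scalarization (C : PointedCone ℝ E) (e v : E) : ℝ :=
  sInf {r : ℝ | r • e - v ∈ C}

section Scalarization

variable {C : PointedCone ℝ E} {e u v z : E}

theorem bddBelow_setOf_smul_sub_mem (hC : (C : ConvexCone ℝ E).Salient) (he : e ∈ C)
    (he0 : e ≠ 0) (hv : v ∈ C) : BddBelow {r : ℝ | r • e - v ∈ C} :=
  ⟨0, fun _ hr => nonneg_of_smul_sub_mem hC he he0 hv hr⟩

theorem scalarization_le (hC : (C : ConvexCone ℝ E).Salient) (he : e ∈ C) (he0 : e ≠ 0)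
    (hv : v ∈ C) {r : ℝ} (hr : r • e - v ∈ C) : scalarization C e v ≤ r :=
  csInf_le (bddBelow_setOf_smul_sub_mem hC he he0 hv) hr

theorem scalarization_of_subsingleton [Subsingleton E] (C : PointedCone ℝ E) (e v : E) :
    scalarization C e v = 0 := by
  have hall : {r : ℝ | r • e - v ∈ C} = Set.univ :=
    Set.eq_univ_of_forall fun r => by
      rw [Set.mem_ofPred_eq, Subsingleton.elim (r • e - v) 0]
      exact C.zero_mem
  rw [scalarization, hall, Real.sInf_univ]

variable [TopologicalSpace E] [IsTopologicalAddGroup E] [ContinuousSMul ℝ E]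

theorem smul_scalarization_sub_mem (hC : (C : ConvexCone ℝ E).Salient)
    (hCc : IsClosed (C : Set E)) (he : e ∈ interior (C : Set E)) (he0 : e ≠ 0) (hv : v ∈ C) :
    scalarization C e v • e - v ∈ C := by
  have hclosed : IsClosed {r : ℝ | r • e - v ∈ C} :=
    hCc.preimage (by fun_prop : Continuous fun r : ℝ => r • e - v)
  exact hclosed.csInf_mem (exists_smul_sub_mem_of_mem_interior he v)
    (bddBelow_setOf_smul_sub_mem hC (interior_subset he) he0 hv)

theorem scalarization_zero (hC : (C : ConvexCone ℝ E).Salient) (he : e ∈ interior (C : Set E))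
    (he0 : e ≠ 0) : scalarization C e 0 = 0 := by
  refine le_antisymm (scalarization_le hC (interior_subset he) he0 C.zero_mem (by simp)) ?_
  exact le_csInf (exists_smul_sub_mem_of_mem_interior he 0)
    fun _ hr => nonneg_of_smul_sub_mem hC (interior_subset he) he0 C.zero_mem hr

theorem eq_zero_of_scalarization_eq_zero (hC : (C : ConvexCone ℝ E).Salient)
    (hCc : IsClosed (C : Set E)) (he : e ∈ interior (C : Set E)) (he0 : e ≠ 0) (hv : v ∈ C)
    (h : scalarization C e v = 0) : v = 0 := by
  have hmem := smul_scalarization_sub_mem hC hCc he he0 hv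
  rw [h, zero_smul, zero_sub] at hmem
  by_contra hv0
  exact hC v hv hv0 hmem

theorem scalarization_le_add_of_add_sub_mem (hC : (C : ConvexCone ℝ E).Salient)
    (hCc : IsClosed (C : Set E)) (he : e ∈ interior (C : Set E)) (he0 : e ≠ 0) (hu : u ∈ C)
    (hv : v ∈ C) (hz : z ∈ C) (h : u + v - z ∈ C) :
    scalarization C e z ≤ scalarization C e u + scalarization C e v := by
  refine scalarization_le hC (interior_subset he) he0 hz ?_
  convert C.add_mem (C.add_mem (smul_scalarization_sub_mem hC hCc he he0 hu)
    (smul_scalarization_sub_mem hC hCc he he0 hv)) h using 1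
  module

end Scalarization

structure IsModularConeMetric [TopologicalSpace E] {X : Type*} (C : PointedCone ℝ E)
    (w : E → X → X → E) : Prop where
  eq_zero_iff : ∀ x y : X, (∀ c ∈ interior (C : Set E), w c x y = 0) ↔ x = y
  symm : ∀ c ∈ interior (C : Set E), ∀ x y : X, w c x y = w c y x
  triangle : ∀ c₁ ∈ interior (C : Set E), ∀ c₂ ∈ interior (C : Set E), ∀ x y z : X,
    w c₁ x z + w c₂ z y - w (c₁ + c₂) x y ∈ C

namespace IsModularConeMetric

variable [TopologicalSpace E] {X : Type*} {C : PointedCone ℝ E} {w : E → X → X → E} {c e : E}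

theorem self_eq_zero (hw : IsModularConeMetric C w) (hc : c ∈ interior (C : Set E)) (x : X) :
    w c x x = 0 :=
  (hw.eq_zero_iff x x).2 rfl c hc

theorem mem [ContinuousConstSMul ℝ E] (hw : IsModularConeMetric C w)
    (hc : c ∈ interior (C : Set E)) (x y : X) : w c x y ∈ C := by
  have hcc : c + c ∈ interior (C : Set E) := by
    rw [← two_smul ℝ c]
    exact C.smul_mem_interior two_pos hc
  have h := hw.triangle c hc c hc x x y
  rw [hw.symm c hc y x, hw.self_eq_zero hcc, sub_zero, ← two_smul ℝ] at h
  exact (C.smul_mem_iff two_pos).1 h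

variable [IsTopologicalAddGroup E] [ContinuousSMul ℝ E]

theorem eq_of_forall_smul_eq_zero (hw : IsModularConeMetric C w)
    (hC : (C : ConvexCone ℝ E).Salient) (he : e ∈ interior (C : Set E)) {x y : X}
    (h : ∀ t : ℝ, 0 < t → w (t • e) x y = 0) : x = y := by
  refine (hw.eq_zero_iff x y).1 fun c hc => ?_
  obtain ⟨t, ht, hct⟩ := exists_pos_sub_smul_mem_interior hc e
  have hneg := hw.triangle _ hct _ (C.smul_mem_interior ht he) x y x
  rw [sub_add_cancel, hw.self_eq_zero hct, h t ht, zero_add, zero_sub] at hneg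
  by_contra hne
  exact hC _ (hw.mem hc x y) hne hneg

end IsModularConeMetric

end

theorem scalarized_modular_cone_metric_is_modular_metric_general
    {E : Type*} [AddCommGroup E] [Module ℝ E] [TopologicalSpace E]
    [IsTopologicalAddGroup E] [ContinuousSMul ℝ E]
    (P : Set E) (hPclosed : IsClosed P)
    (hPadd : ∀ a ∈ P, ∀ b ∈ P, a + b ∈ P)
    (hPsmul : ∀ r : ℝ, 0 ≤ r → ∀ a ∈ P, r • a ∈ P)
    (hPpointed : P ∩ (-P) = {0})
    {X : Type*}
    (w : E → X → X → E)
    (hw1 : ∀ x y : X, (∀ c ∈ interior P, w c x y = 0) ↔ x = y)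
    (hw2 : ∀ c ∈ interior P, ∀ x y : X, w c x y = w c y x)
    (hw3 : ∀ c₁ ∈ interior P, ∀ c₂ ∈ interior P, ∀ x y z : X,
      w c₁ x z + w c₂ z y - w (c₁ + c₂) x y ∈ P)
    (e : E) (he : e ∈ interior P)
    (W : ℝ → X → X → ℝ)
    (hW : ∀ lam : ℝ, 0 < lam → ∀ x y : X,
      W lam x y = sInf {r : ℝ | r • e - w (lam • e) x y ∈ P}) :
    (∀ x y : X, (∀ lam : ℝ, 0 < lam → W lam x y = 0) ↔ x = y) ∧
    (∀ lam : ℝ, 0 < lam → ∀ x y : X, W lam x y = W lam y x) ∧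
    (∀ lam mu : ℝ, 0 < lam → 0 < mu → ∀ x y z : X,
      W (lam + mu) x y ≤ W lam x z + W mu z y) := by
  obtain ⟨C, rfl⟩ : ∃ C : PointedCone ℝ E, (C : Set E) = P :=
    ⟨{ carrier := P
       add_mem' := fun ha hb => hPadd _ ha _ hb
       zero_mem' := by simpa using hPsmul 0 le_rfl e (interior_subset he)
       smul_mem' := fun c _ ha => hPsmul c c.2 _ ha }, rfl⟩
  have hC : (C : ConvexCone ℝ E).Salient := C.salient_iff_inter_neg_eq_singleton.2 hPpointed
  have hw : IsModularConeMetric C w := ⟨hw1, hw2, hw3⟩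
  replace hW : ∀ lam : ℝ, 0 < lam → ∀ x y : X,
      W lam x y = scalarization C e (w (lam • e) x y) := hW
  have hwe : ∀ lam : ℝ, 0 < lam → lam • e ∈ interior (C : Set E) :=
    fun lam hlam => C.smul_mem_interior hlam he
  rcases eq_or_ne e 0 with rfl | he0
  · have := PointedCone.subsingleton_of_zero_mem_interior hC he
    have hW0 : ∀ lam : ℝ, 0 < lam → ∀ x y : X, W lam x y = 0 :=
      fun lam hlam x y => (hW lam hlam x y).trans (scalarization_of_subsingleton C 0 _)
    refine ⟨fun x y => ⟨fun _ => (hw1 x y).1 fun _ _ => Subsingleton.elim _ _,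
      fun _ lam hlam => hW0 lam hlam x y⟩, fun lam hlam x y => ?_, fun lam mu hlam hmu x y z => ?_⟩
    · rw [hW0 lam hlam, hW0 lam hlam]
    · rw [hW0 _ (add_pos hlam hmu), hW0 lam hlam, hW0 mu hmu, add_zero]
  have hwC : ∀ lam : ℝ, 0 < lam → ∀ x y : X, w (lam • e) x y ∈ C :=
    fun lam hlam => hw.mem (hwe lam hlam)
  refine ⟨fun x y => ⟨fun h => ?_, ?_⟩, fun lam hlam x y => ?_, fun lam mu hlam hmu x y z => ?_⟩
  · refine hw.eq_of_forall_smul_eq_zero hC he fun lam hlam => ?_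
    exact eq_zero_of_scalarization_eq_zero hC hPclosed he he0 (hwC lam hlam x y)
      ((hW lam hlam x y).symm.trans (h lam hlam))
  · rintro rfl lam hlam
    rw [hW lam hlam, hw.self_eq_zero (hwe lam hlam), scalarization_zero hC he he0]
  · rw [hW lam hlam, hW lam hlam, hw.symm _ (hwe lam hlam)]
  · have hsplit := hw.triangle _ (hwe lam hlam) _ (hwe mu hmu) x y z
    rw [← add_smul] at hsplit
    rw [hW _ (add_pos hlam hmu), hW lam hlam, hW mu hmu]
    exact scalarization_le_add_of_add_sub_mem hC hPclosed he he0 (hwC lam hlam x z)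
      (hwC mu hmu z y) (hwC _ (add_pos hlam hmu) x y) hsplit

/-- Let `w` be a modular cone metric on `X` and `e ∈ interior P`.
Then `W^e : (0,∞) × X × X → [0,∞)` defined via the nonlinear scalarization
`W^e_λ(x,y) = ξ_e(w (λ • e) x y)`, where `ξ_e(v) = inf {r : ℝ | r • e - v ∈ P}`,
is a modular metric on `X`: (i) `W^e_λ(x,y) = 0` for all `λ > 0` iff `x = y`;
(ii) symmetry; (iii) `W^e_{λ+μ}(x,y) ≤ W^e_λ(x,z) + W^e_μ(z,y)`. -/
theorem scalarized_modular_cone_metric_is_modular_metric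
    {E : Type*} [AddCommGroup E] [Module ℝ E] [TopologicalSpace E]
    [IsTopologicalAddGroup E] [ContinuousSMul ℝ E]
    [LocallyConvexSpace ℝ E] [T2Space E]
    (P : Set E) (hPclosed : IsClosed P) (hPconv : Convex ℝ P)
    (hPadd : ∀ a ∈ P, ∀ b ∈ P, a + b ∈ P)
    (hPsmul : ∀ r : ℝ, 0 ≤ r → ∀ a ∈ P, r • a ∈ P)
    (hPpointed : P ∩ (-P) = {0})
    (hPint : (interior P).Nonempty)
    {X : Type*} [Nonempty X]
    (w : E → X → X → E)
    (hw1 : ∀ x y : X, (∀ c ∈ interior P, w c x y = 0) ↔ x = y)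
    (hw2 : ∀ c ∈ interior P, ∀ x y : X, w c x y = w c y x)
    (hw3 : ∀ c₁ ∈ interior P, ∀ c₂ ∈ interior P, ∀ x y z : X,
      w c₁ x z + w c₂ z y - w (c₁ + c₂) x y ∈ P)
    (e : E) (he : e ∈ interior P)
    (W : ℝ → X → X → ℝ)
    (hW : ∀ lam : ℝ, 0 < lam → ∀ x y : X,
      W lam x y = sInf {r : ℝ | r • e - w (lam • e) x y ∈ P}) :
    (∀ x y : X, (∀ lam : ℝ, 0 < lam → W lam x y = 0) ↔ x = y) ∧
    (∀ lam : ℝ, 0 < lam → ∀ x y : X, W lam x y = W lam y x) ∧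
    (∀ lam mu : ℝ, 0 < lam → 0 < mu → ∀ x y z : X,
      W (lam + mu) x y ≤ W lam x z + W mu z y) :=
  scalarized_modular_cone_metric_is_modular_metric_general P hPclosed hPadd hPsmul hPpointed w hw1
    hw2 hw3 e he W hW
end

section
/- Let Y be a compact Hausdorff space, E = C(Y, ℝ) with sup-norm, P = {f ∈ C(Y, ℝ) : f ≥ 0}, and let w be a convex modular cone metric on X. Let 1 ∈ C(Y, ℝ) denote the constant function one. Then W¹ defined by W¹_λ(x,y) = ξ₁(w_{λ·1}(x,y)) for λ > 0 is a convex modular metric on X taking finite values, i.e., W¹ satisfies: (i) for given x, y, W¹_λ(x,y) = 0 for all λ > 0 iff x = y; (ii) W¹_λ(x,y) = W¹_λ(y,x); (iii) W¹_{λ+μ}(x,y) ≤ (λ/(λ+μ))·W¹_λ(x,z) + (μ/(λ+μ))·W¹_μ(z,y), and W¹_λ(x,y) < ∞ for all λ > 0 and x, y ∈ X. -/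
/-!
Because `P` is the cone of nonnegative functions, `r • 1 - f ∈ P` says that `r` bounds `f` above,
so `ξ₁(f)` is the maximum of `f`; by compactness `interior P` consists of the strictly positive
functions. Symmetry and the convexity inequality of `w` then pass to `W¹` pointwise. Convexity
through `y` gives `0 = w_{2c}(x,x) ≤ w_c(x,y)`. If `W¹_λ(x,y) = 0` for all `λ > 0`, then
`w_{λ1}(x,y) ≤ 0`; splitting a positive `c` as `(c - λ1) + λ1` with `λ` below the minimum of `c`,
convexity through `x` gives `w_c(x,y) ≤ (λ / c) w_{λ1}(x,y) ≤ 0`.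
-/

open Set Filter Topology

theorem Real.sInf_upperBounds_range {ι : Type*} {f : ι → ℝ} (hf : BddAbove (range f)) :
    sInf (upperBounds (range f)) = ⨆ i, f i := by
  rcases isEmpty_or_nonempty ι with hι | hι
  · -- both sides are the junk value `0`
    simp [range_eq_empty, Real.iSup_of_isEmpty]
  · exact csInf_upperBounds_eq_csSup hf (range_nonempty f)

namespace ContinuousMap

variable {Y : Type*} [TopologicalSpace Y]

theorem setOf_smul_one_sub_mem_setOf_nonneg (f : C(Y, ℝ)) :
    {r : ℝ | r • (1 : C(Y, ℝ)) - f ∈ {g : C(Y, ℝ) | ∀ t, 0 ≤ g t}} = upperBounds (range f) := by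
  ext r
  simp [mem_upperBounds]

theorem exists_pos_le_of_forall_pos [CompactSpace Y] {c : C(Y, ℝ)} (hc : ∀ t, 0 < c t) :
    ∃ b > 0, ∀ t, b ≤ c t := by
  simpa using isCompact_univ.exists_forall_le' c.continuous.continuousOn fun t _ ↦ hc t

theorem mem_interior_setOf_nonneg_iff [CompactSpace Y] {c : C(Y, ℝ)} :
    c ∈ interior {g : C(Y, ℝ) | ∀ t, 0 ≤ g t} ↔ ∀ t, 0 < c t := by
  constructor
  · intro hc t
    have hlim : Tendsto (fun r : ℝ ↦ c - r • (1 : C(Y, ℝ))) (𝓝 0) (𝓝 c) := by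
      simpa using tendsto_const_nhds.sub ((tendsto_id (x := 𝓝 (0 : ℝ))).smul_const (1 : C(Y, ℝ)))
    obtain ⟨r, hr, hmem⟩ := (hlim.eventually (isOpen_interior.mem_nhds hc)).exists_gt
    have hrt := interior_subset hmem t
    simp only [sub_apply, smul_apply, one_apply, smul_eq_mul, mul_one] at hrt
    linarith
  · intro hc
    obtain ⟨b, hb, hbc⟩ := exists_pos_le_of_forall_pos hc
    refine mem_interior.mpr ⟨Metric.ball c b, fun f hf t ↦ ?_, Metric.isOpen_ball,
      Metric.mem_ball_self hb⟩
    have hft : |f t - c t| < b := (dist_apply_le_dist t).trans_lt hf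
    linarith [neg_abs_le (f t - c t), hbc t]

end ContinuousMap

section ConvexModular

variable {Y : Type*} [TopologicalSpace Y] {X : Type*} {w : C(Y, ℝ) → X → X → C(Y, ℝ)}

theorem convexModular_nonneg (hw0 : ∀ c : C(Y, ℝ), (∀ t, 0 < c t) → ∀ x, w c x x = 0)
    (hsymm : ∀ c : C(Y, ℝ), (∀ t, 0 < c t) → ∀ x y, w c x y = w c y x)
    (hconv : ∀ c₁ : C(Y, ℝ), (∀ t, 0 < c₁ t) → ∀ c₂ : C(Y, ℝ), (∀ t, 0 < c₂ t) →
      ∀ x y z t, w (c₁ + c₂) x y t ≤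
        c₁ t / (c₁ t + c₂ t) * w c₁ x z t + c₂ t / (c₁ t + c₂ t) * w c₂ z y t)
    {c : C(Y, ℝ)} (hc : ∀ t, 0 < c t) (x y : X) (t : Y) : 0 ≤ w c x y t := by
  have hcc : ∀ t, 0 < (c + c) t := fun t ↦ add_pos (hc t) (hc t)
  calc 0 = w (c + c) x x t := by rw [hw0 _ hcc]; rfl
    _ ≤ c t / (c t + c t) * w c x y t + c t / (c t + c t) * w c y x t := hconv c hc c hc x x y t
    _ = w c x y t := by
      rw [hsymm c hc y x, ← add_mul, ← add_div, div_self (add_pos (hc t) (hc t)).ne', one_mul]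

theorem convexModular_eq_zero_of_forall_smul_one_nonpos [CompactSpace Y]
    (hw0 : ∀ c : C(Y, ℝ), (∀ t, 0 < c t) → ∀ x, w c x x = 0)
    (hconv : ∀ c₁ : C(Y, ℝ), (∀ t, 0 < c₁ t) → ∀ c₂ : C(Y, ℝ), (∀ t, 0 < c₂ t) →
      ∀ x y z t, w (c₁ + c₂) x y t ≤
        c₁ t / (c₁ t + c₂ t) * w c₁ x z t + c₂ t / (c₁ t + c₂ t) * w c₂ z y t)
    (hnonneg : ∀ c : C(Y, ℝ), (∀ t, 0 < c t) → ∀ x y t, 0 ≤ w c x y t) {x y : X}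
    (h : ∀ lam : ℝ, 0 < lam → ∀ t, w (lam • 1) x y t ≤ 0)
    {c : C(Y, ℝ)} (hc : ∀ t, 0 < c t) : w c x y = 0 := by
  obtain ⟨b, hb, hbc⟩ := ContinuousMap.exists_pos_le_of_forall_pos hc
  have hl : ∀ t, 0 < ((b / 2) • (1 : C(Y, ℝ))) t := fun _ ↦ by simpa using half_pos hb
  have hd : ∀ t, 0 < (c - (b / 2) • (1 : C(Y, ℝ))) t := fun t ↦ by
    simp only [ContinuousMap.sub_apply, ContinuousMap.smul_apply, ContinuousMap.one_apply,
      smul_eq_mul, mul_one]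
    linarith [hbc t]
  ext t
  refine le_antisymm ?_ (hnonneg c hc x y t)
  have key := hconv _ hd _ hl x y x t
  rw [sub_add_cancel, hw0 _ hd x] at key
  simp only [ContinuousMap.zero_apply, mul_zero, zero_add] at key
  exact key.trans (mul_nonpos_of_nonneg_of_nonpos
    (div_nonneg (hl t).le (add_pos (hd t) (hl t)).le) (h _ (half_pos hb) t))

theorem iSup_convexModular_add_smul_one_le [CompactSpace Y]
    (hconv : ∀ c₁ : C(Y, ℝ), (∀ t, 0 < c₁ t) → ∀ c₂ : C(Y, ℝ), (∀ t, 0 < c₂ t) →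
      ∀ x y z t, w (c₁ + c₂) x y t ≤
        c₁ t / (c₁ t + c₂ t) * w c₁ x z t + c₂ t / (c₁ t + c₂ t) * w c₂ z y t)
    (hnonneg : ∀ c : C(Y, ℝ), (∀ t, 0 < c t) → ∀ x y t, 0 ≤ w c x y t)
    {lam mu : ℝ} (hlam : 0 < lam) (hmu : 0 < mu) (x y z : X) :
    ⨆ t, w ((lam + mu) • 1) x y t ≤
      lam / (lam + mu) * (⨆ t, w (lam • 1) x z t) + mu / (lam + mu) * ⨆ t, w (mu • 1) z y t := by
  have hbdd (f : C(Y, ℝ)) : BddAbove (range f) := (isCompact_range f.continuous).bddAbove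
  have hone {a : ℝ} (ha : 0 < a) (t : Y) : 0 < (a • (1 : C(Y, ℝ))) t := by simpa
  refine Real.iSup_le (fun t ↦ ?_) ?_
  · have h := hconv _ (hone hlam) _ (hone hmu) x y z t
    rw [← add_smul] at h
    simp only [ContinuousMap.smul_apply, ContinuousMap.one_apply, smul_eq_mul, mul_one] at h
    refine h.trans (add_le_add ?_ ?_) <;> gcongr <;> exact le_ciSup (hbdd _) t
  · have hxz := Real.iSup_nonneg (hnonneg _ (hone hlam) x z)
    have hzy := Real.iSup_nonneg (hnonneg _ (hone hmu) z y)
    positivity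

end ConvexModular

theorem scalarized_convex_modular_cone_metric_is_convex_modular_metric_general
    {Y : Type*} [TopologicalSpace Y] [CompactSpace Y]
    (P : Set C(Y, ℝ)) (hP : P = {f : C(Y, ℝ) | ∀ t : Y, 0 ≤ f t})
    {X : Type*}
    (w : C(Y, ℝ) → X → X → C(Y, ℝ))
    (hw1 : ∀ x y : X, (∀ c ∈ interior P, w c x y = 0) ↔ x = y)
    (hw2 : ∀ c ∈ interior P, ∀ x y : X, w c x y = w c y x)
    (hw3 : ∀ c₁ ∈ interior P, ∀ c₂ ∈ interior P, ∀ x y z : X, ∀ t : Y,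
      w (c₁ + c₂) x y t ≤
        (c₁ t / (c₁ t + c₂ t)) * w c₁ x z t
          + (c₂ t / (c₁ t + c₂ t)) * w c₂ z y t)
    (W : ℝ → X → X → ℝ)
    (hW : ∀ lam : ℝ, 0 < lam → ∀ x y : X,
      W lam x y =
        sInf {r : ℝ | r • (1 : C(Y, ℝ)) - w (lam • (1 : C(Y, ℝ))) x y ∈ P}) :
    (∀ x y : X, (∀ lam : ℝ, 0 < lam → W lam x y = 0) ↔ x = y) ∧
    (∀ lam : ℝ, 0 < lam → ∀ x y : X, W lam x y = W lam y x) ∧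
    (∀ lam mu : ℝ, 0 < lam → 0 < mu → ∀ x y z : X,
      W (lam + mu) x y ≤
        (lam / (lam + mu)) * W lam x z + (mu / (lam + mu)) * W mu z y) ∧
    (∀ lam : ℝ, 0 < lam → ∀ x y : X,
      {r : ℝ | r • (1 : C(Y, ℝ)) - w (lam • (1 : C(Y, ℝ))) x y ∈ P}.Nonempty) := by
  subst hP
  simp only [ContinuousMap.mem_interior_setOf_nonneg_iff] at hw1 hw2 hw3
  have hw0 : ∀ c : C(Y, ℝ), (∀ t, 0 < c t) → ∀ x, w c x x = 0 := fun c hc x ↦ (hw1 x x).2 rfl c hc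
  have hnonneg : ∀ c : C(Y, ℝ), (∀ t, 0 < c t) → ∀ x y t, 0 ≤ w c x y t :=
    fun c hc ↦ convexModular_nonneg hw0 hw2 hw3 hc
  have hbdd (f : C(Y, ℝ)) : BddAbove (range f) := (isCompact_range f.continuous).bddAbove
  have hone {lam : ℝ} (hlam : 0 < lam) (t : Y) : 0 < (lam • (1 : C(Y, ℝ))) t := by simpa
  simp only [ContinuousMap.setOf_smul_one_sub_mem_setOf_nonneg,
    Real.sInf_upperBounds_range (hbdd _)] at hW ⊢
  refine ⟨fun x y ↦ ⟨fun h ↦ ?_, ?_⟩, ?_, ?_, fun _ _ _ _ ↦ hbdd _⟩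
  · refine (hw1 x y).1 fun c hc ↦ convexModular_eq_zero_of_forall_smul_one_nonpos hw0 hw3 hnonneg
      (fun lam hlam t ↦ ?_) hc
    exact (le_ciSup (hbdd _) t).trans_eq ((hW lam hlam x y).symm.trans (h lam hlam))
  · rintro rfl lam hlam
    simp [hW lam hlam, hw0 _ (hone hlam)]
  · intro lam hlam x y
    rw [hW lam hlam, hW lam hlam, hw2 _ (hone hlam)]
  · intro lam mu hlam hmu x y z
    rw [hW _ (add_pos hlam hmu), hW lam hlam, hW mu hmu]
    exact iSup_convexModular_add_smul_one_le hw3 hnonneg hlam hmu x y z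

/-- Let `Y` be a compact Hausdorff space, `E = C(Y, ℝ)` with the
sup-norm, `P` the cone of nonnegative functions, and `w` a convex modular cone
metric on `X`.  With `1` the constant function one, define
`W¹_λ(x,y) = ξ₁(w (λ • 1) x y)` where `ξ₁(v) = inf {r : ℝ | r • 1 - v ∈ P}`.
Then `W¹` is a convex modular metric on `X` taking finite values: (i)
`W¹_λ(x,y) = 0` for all `λ > 0` iff `x = y`; (ii) symmetry; (iii)
`W¹_{λ+μ}(x,y) ≤ (λ/(λ+μ))·W¹_λ(x,z) + (μ/(λ+μ))·W¹_μ(z,y)`; and `W¹_λ(x,y) < ∞`,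
formalized as nonemptiness of the defining set of real bounds. -/
theorem scalarized_convex_modular_cone_metric_is_convex_modular_metric
    {Y : Type*} [TopologicalSpace Y] [CompactSpace Y] [T2Space Y]
    (P : Set C(Y, ℝ)) (hP : P = {f : C(Y, ℝ) | ∀ t : Y, 0 ≤ f t})
    {X : Type*} [Nonempty X]
    (w : C(Y, ℝ) → X → X → C(Y, ℝ))
    (hw1 : ∀ x y : X, (∀ c ∈ interior P, w c x y = 0) ↔ x = y)
    (hw2 : ∀ c ∈ interior P, ∀ x y : X, w c x y = w c y x)
    (hw3 : ∀ c₁ ∈ interior P, ∀ c₂ ∈ interior P, ∀ x y z : X, ∀ t : Y,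
      w (c₁ + c₂) x y t ≤
        (c₁ t / (c₁ t + c₂ t)) * w c₁ x z t
          + (c₂ t / (c₁ t + c₂ t)) * w c₂ z y t)
    (W : ℝ → X → X → ℝ)
    (hW : ∀ lam : ℝ, 0 < lam → ∀ x y : X,
      W lam x y =
        sInf {r : ℝ | r • (1 : C(Y, ℝ)) - w (lam • (1 : C(Y, ℝ))) x y ∈ P}) :
    (∀ x y : X, (∀ lam : ℝ, 0 < lam → W lam x y = 0) ↔ x = y) ∧
    (∀ lam : ℝ, 0 < lam → ∀ x y : X, W lam x y = W lam y x) ∧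
    (∀ lam mu : ℝ, 0 < lam → 0 < mu → ∀ x y z : X,
      W (lam + mu) x y ≤
        (lam / (lam + mu)) * W lam x z + (mu / (lam + mu)) * W mu z y) ∧
    (∀ lam : ℝ, 0 < lam → ∀ x y : X,
      {r : ℝ | r • (1 : C(Y, ℝ)) - w (lam • (1 : C(Y, ℝ))) x y ∈ P}.Nonempty) :=
  scalarized_convex_modular_cone_metric_is_convex_modular_metric_general P hP w hw1 hw2 hw3 W hW
end

section
/- Let Y be a compact Hausdorff space, E = C(Y, ℝ) with sup-norm, P = {f ∈ C(Y, ℝ) : f ≥ 0}, and let (X, w) be a complete convex modular cone metric space. Suppose there exist a constant k ∈ (0,1) and c₀ ∈ int P such that a mapping T : X → X satisfies w_{kc}(Tx, Ty) ⪯ w_c(x, y) for all c with 0 ≪ c ≪ c₀ and all x, y ∈ X. Then T has a unique fixed point in X. -/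
/-!
The contraction condition iterates to `w_{kⁿc}(Tⁿx, Tⁿy) ⪯ w_c(x, y)`, while convexity gives
`w_c ⪯ μ w_{μc}` for `0 < μ ≤ 1`; together they make the orbit of any point decay geometrically,
`w_c(Tⁿx, Tᵐx) ⪯ kⁿ w_{(1-k)c}(x, Tx)`, so it is Cauchy and has a limit `z`. Two points are equal
as soon as `w_c(x, y) ≪ c` for all small `c ≫ 0`, since then `w_c(x, y) ⪯ w_{μc}(x, y) ≪ μc → 0`;
this shows both that `Tz = z` and that a fixed point is unique.
-/

open Filter Topology

section Cone

variable {Y : Type*} [TopologicalSpace Y] [CompactSpace Y]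

theorem ContinuousMap.isOpen_setOf_forall_pos : IsOpen {f : C(Y, ℝ) | ∀ t, 0 < f t} := by
  simpa [Set.MapsTo] using
    isOpen_setOfPred_mapsTo (X := Y) isCompact_univ (isOpen_Ioi (a := (0 : ℝ)))

theorem ContinuousMap.mem_interior_nonneg_iff (c : C(Y, ℝ)) :
    c ∈ interior {f : C(Y, ℝ) | ∀ t, 0 ≤ f t} ↔ ∀ t, 0 < c t := by
  refine ⟨fun hc t => ?_, fun hc => interior_maximal (fun f hf t => (hf t).le)
    isOpen_setOf_forall_pos hc⟩
  have hlim : Tendsto (fun ε : ℝ => c - ε • 1) (𝓝[>] 0) (𝓝 c) := by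
    simpa using (tendsto_const_nhds.sub
      ((tendsto_id (x := 𝓝 (0 : ℝ))).smul_const (1 : C(Y, ℝ)))).mono_left nhdsWithin_le_nhds
  obtain ⟨ε, hε, hε0⟩ :=
    ((hlim.eventually (mem_interior_iff_mem_nhds.mp hc)).and self_mem_nhdsWithin).exists
  have : 0 ≤ c t - ε := by simpa using hε t
  linarith [show (0 : ℝ) < ε from hε0]

theorem ContinuousMap.eventually_mul_lt {ι : Type*} {l : Filter ι} {a : ι → ℝ}
    (ha : Tendsto a l (𝓝 0)) (f : C(Y, ℝ)) {c : C(Y, ℝ)} (hc : ∀ t, 0 < c t) :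
    ∀ᶠ i in l, ∀ t, a i * f t < c t := by
  have hlim : Tendsto (fun i => c - a i • f) l (𝓝 c) := by
    simpa using tendsto_const_nhds.sub (ha.smul_const f)
  filter_upwards [hlim.eventually (isOpen_setOf_forall_pos.mem_nhds hc)] with i hi t
  simpa using hi t

theorem ContinuousMap.eventually_nhdsGT_mul_lt (f : C(Y, ℝ)) {c : C(Y, ℝ)} (hc : ∀ t, 0 < c t) :
    ∀ᶠ μ in 𝓝[>] (0 : ℝ), 0 < μ ∧ μ ≤ 1 ∧ ∀ t, μ * f t < c t := by
  filter_upwards [self_mem_nhdsWithin, nhdsWithin_le_nhds (Iic_mem_nhds one_pos),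
    nhdsWithin_le_nhds (eventually_mul_lt tendsto_id f hc)] with μ h0 h1 h2
  exact ⟨h0, h1, h2⟩

end Cone

section ModularMetric

variable {Y : Type*} [TopologicalSpace Y] {X : Type*}

/- `c ≫ 0` is written pointwise, `∀ t, 0 < c t`; for compact `Y` this is `c ∈ interior P`
by `ContinuousMap.mem_interior_nonneg_iff`. -/
structure IsConvexModularConeMetric (w : C(Y, ℝ) → X → X → C(Y, ℝ)) : Prop where
  forall_eq_zero_iff : ∀ x y : X, (∀ c : C(Y, ℝ), (∀ t, 0 < c t) → w c x y = 0) ↔ x = y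
  symm : ∀ c : C(Y, ℝ), (∀ t, 0 < c t) → ∀ x y : X, w c x y = w c y x
  le_convex : ∀ c₁ : C(Y, ℝ), (∀ t, 0 < c₁ t) → ∀ c₂ : C(Y, ℝ), (∀ t, 0 < c₂ t) →
    ∀ x y z : X, ∀ t : Y, w (c₁ + c₂) x y t ≤
      (c₁ t / (c₁ t + c₂ t)) * w c₁ x z t + (c₂ t / (c₁ t + c₂ t)) * w c₂ z y t

def IsModularCauchy (w : C(Y, ℝ) → X → X → C(Y, ℝ)) (u : ℕ → X) : Prop :=
  ∀ c : C(Y, ℝ), (∀ t, 0 < c t) → ∃ N : ℕ, ∀ n > N, ∀ m > N, ∀ t, w c (u n) (u m) t < c t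

def ModularTendsto (w : C(Y, ℝ) → X → X → C(Y, ℝ)) (u : ℕ → X) (x : X) : Prop :=
  ∀ c : C(Y, ℝ), (∀ t, 0 < c t) → ∃ N : ℕ, ∀ n > N, ∀ t, w c (u n) x t < c t

def IsModularContraction (w : C(Y, ℝ) → X → X → C(Y, ℝ)) (k : ℝ) (c₀ : C(Y, ℝ)) (T : X → X) :
    Prop :=
  ∀ c : C(Y, ℝ), (∀ t, 0 < c t) → (∀ t, c t < c₀ t) →
    ∀ x y : X, ∀ t, w (k • c) (T x) (T y) t ≤ w c x y t

namespace IsConvexModularConeMetric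

variable {w : C(Y, ℝ) → X → X → C(Y, ℝ)} {c : C(Y, ℝ)}

theorem self_eq_zero (hw : IsConvexModularConeMetric w) (hc : ∀ t, 0 < c t) (x : X) :
    w c x x = 0 :=
  (hw.forall_eq_zero_iff x x).mpr rfl c hc

theorem nonneg (hw : IsConvexModularConeMetric w) (hc : ∀ t, 0 < c t) (x y : X) (t : Y) :
    0 ≤ w c x y t := by
  have h := hw.le_convex c hc c hc x x y t
  rwa [hw.self_eq_zero (fun s => add_pos (hc s) (hc s)), hw.symm c hc y x,
    ← add_mul, ← add_div, div_self (add_pos (hc t) (hc t)).ne', one_mul] at h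

theorem triangle (hw : IsConvexModularConeMetric w) {a b : ℝ} (ha : 0 < a) (hb : 0 < b)
    (hab : a + b = 1) (hc : ∀ t, 0 < c t) (x y z : X) (t : Y) :
    w c x y t ≤ a * w (a • c) x z t + b * w (b • c) z y t := by
  have h := hw.le_convex (a • c) (fun s => mul_pos ha (hc s)) (b • c)
    (fun s => mul_pos hb (hc s)) x y z t
  have hct := (hc t).ne'
  rwa [← add_smul, hab, one_smul, ContinuousMap.smul_apply, ContinuousMap.smul_apply,
    smul_eq_mul, smul_eq_mul, ← add_mul, hab, one_mul, mul_div_cancel_right₀ _ hct,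
    mul_div_cancel_right₀ _ hct] at h

theorem le_smul_mul (hw : IsConvexModularConeMetric w) {μ : ℝ} (hμ0 : 0 < μ) (hμ1 : μ ≤ 1)
    (hc : ∀ t, 0 < c t) (x y : X) (t : Y) : w c x y t ≤ μ * w (μ • c) x y t := by
  rcases hμ1.lt_or_eq with hμ1 | rfl
  · simpa [hw.self_eq_zero (c := (1 - μ) • c) (fun s => mul_pos (sub_pos.mpr hμ1) (hc s))] using
      hw.triangle hμ0 (sub_pos.mpr hμ1) (add_sub_cancel μ 1) hc x y y t
  · simp

theorem le_smul (hw : IsConvexModularConeMetric w) {μ : ℝ} (hμ0 : 0 < μ) (hμ1 : μ ≤ 1)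
    (hc : ∀ t, 0 < c t) (x y : X) (t : Y) : w c x y t ≤ w (μ • c) x y t :=
  (hw.le_smul_mul hμ0 hμ1 hc x y t).trans
    (mul_le_of_le_one_left (hw.nonneg (fun s => mul_pos hμ0 (hc s)) x y t) hμ1)

theorem eq_of_forall_lt [CompactSpace Y] (hw : IsConvexModularConeMetric w) {c₀ : C(Y, ℝ)}
    (hc₀ : ∀ t, 0 < c₀ t) {x y : X}
    (h : ∀ c : C(Y, ℝ), (∀ t, 0 < c t) → (∀ t, c t < c₀ t) → ∀ t, w c x y t < c t) :
    x = y := by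
  refine (hw.forall_eq_zero_iff x y).mp fun c hc => ContinuousMap.ext fun t => ?_
  refine le_antisymm ?_ (hw.nonneg hc x y t)
  have hlim : Tendsto (fun μ : ℝ => μ * c t) (𝓝[>] 0) (𝓝 0) :=
    ((continuous_mul_const (c t)).tendsto' 0 0 (zero_mul _)).mono_left nhdsWithin_le_nhds
  refine ge_of_tendsto hlim ?_
  filter_upwards [ContinuousMap.eventually_nhdsGT_mul_lt c hc₀] with μ ⟨hμ0, hμ1, hμc₀⟩
  exact (hw.le_smul hμ0 hμ1 hc x y t).trans (h _ (fun s => mul_pos hμ0 (hc s)) hμc₀ t).le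

end IsConvexModularConeMetric

namespace IsModularContraction

variable {w : C(Y, ℝ) → X → X → C(Y, ℝ)} {k : ℝ} {c₀ c : C(Y, ℝ)} {T : X → X}

theorem iterate (hT : IsModularContraction w k c₀ T) (hk0 : 0 < k) (hk1 : k ≤ 1)
    (hc : ∀ t, 0 < c t) (hcc₀ : ∀ t, c t < c₀ t) (n : ℕ) (x y : X) (t : Y) :
    w (k ^ n • c) (T^[n] x) (T^[n] y) t ≤ w c x y t := by
  induction n generalizing t with
  | zero => simp
  | succ n ih =>
    have hkn : 0 < k ^ n := pow_pos hk0 n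
    rw [pow_succ', mul_smul, Function.iterate_succ_apply', Function.iterate_succ_apply']
    refine (hT _ (fun s => mul_pos hkn (hc s)) (fun s => ?_) _ _ t).trans (ih t)
    calc k ^ n * c s ≤ c s := mul_le_of_le_one_left (hc s).le (pow_le_one₀ hk0.le hk1)
      _ < c₀ s := hcc₀ s

theorem self_iterate_le (hT : IsModularContraction w k c₀ T) (hw : IsConvexModularConeMetric w)
    (hk0 : 0 < k) (hk1 : k < 1) (hc : ∀ t, 0 < c t) (hcc₀ : ∀ t, c t < c₀ t) (x : X) (j : ℕ)
    (t : Y) : w c x (T^[j] x) t ≤ w ((1 - k) • c) x (T x) t := by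
  set B := w ((1 - k) • c) x (T x) t
  induction j with
  | zero =>
    simpa [hw.self_eq_zero hc] using
      hw.nonneg (fun s => mul_pos (sub_pos.mpr hk1) (hc s)) x (T x) t
  | succ j ih =>
    calc w c x (T^[j + 1] x) t
        ≤ (1 - k) * B + k * w (k • c) (T x) (T (T^[j] x)) t := by
          rw [Function.iterate_succ_apply']
          exact hw.triangle (sub_pos.mpr hk1) hk0 (sub_add_cancel 1 k) hc x _ (T x) t
      _ ≤ (1 - k) * B + k * B := by
          gcongr
          exact (hT c hc hcc₀ x _ t).trans ih
      _ = B := by ring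

theorem iterate_iterate_le (hT : IsModularContraction w k c₀ T)
    (hw : IsConvexModularConeMetric w) (hk0 : 0 < k) (hk1 : k < 1) (hc : ∀ t, 0 < c t)
    (hcc₀ : ∀ t, c t < c₀ t) (x : X) {n m : ℕ} (hnm : n ≤ m) (t : Y) :
    w c (T^[n] x) (T^[m] x) t ≤ k ^ n * w ((1 - k) • c) x (T x) t := by
  obtain ⟨j, rfl⟩ := Nat.exists_eq_add_of_le hnm
  rw [Function.iterate_add_apply]
  calc w c (T^[n] x) (T^[n] (T^[j] x)) t
      ≤ k ^ n * w (k ^ n • c) (T^[n] x) (T^[n] (T^[j] x)) t :=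
        hw.le_smul_mul (pow_pos hk0 n) (pow_le_one₀ hk0.le hk1.le) hc _ _ t
    _ ≤ k ^ n * w ((1 - k) • c) x (T x) t := by
        gcongr
        exact (hT.iterate hk0 hk1.le hc hcc₀ n x _ t).trans
          (hT.self_iterate_le hw hk0 hk1 hc hcc₀ x j t)

theorem isModularCauchy_iterate [CompactSpace Y] (hT : IsModularContraction w k c₀ T)
    (hw : IsConvexModularConeMetric w) (hk0 : 0 < k) (hk1 : k < 1) (hc₀ : ∀ t, 0 < c₀ t)
    (x : X) : IsModularCauchy w fun n => T^[n] x := by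
  intro c hc
  obtain ⟨μ, hμ0, hμ1, hμc₀⟩ := (ContinuousMap.eventually_nhdsGT_mul_lt c hc₀).exists
  have hμc : ∀ t, 0 < (μ • c) t := fun t => mul_pos hμ0 (hc t)
  obtain ⟨N, hN⟩ := eventually_atTop.mp (ContinuousMap.eventually_mul_lt
    (tendsto_pow_atTop_nhds_zero_of_lt_one hk0.le hk1) (w ((1 - k) • μ • c) x (T x)) hc)
  have hlt : ∀ n m, N ≤ n → n ≤ m → ∀ t, w c (T^[n] x) (T^[m] x) t < c t :=
    fun n m hn hnm t => calc
      w c (T^[n] x) (T^[m] x) t ≤ w (μ • c) (T^[n] x) (T^[m] x) t :=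
        hw.le_smul hμ0 hμ1 hc _ _ t
      _ ≤ k ^ n * w ((1 - k) • μ • c) x (T x) t :=
        hT.iterate_iterate_le hw hk0 hk1 hμc hμc₀ x hnm t
      _ < c t := hN n hn t
  refine ⟨N, fun n hn m hm t => ?_⟩
  rcases le_total n m with hnm | hmn
  · exact hlt n m hn.le hnm t
  · rw [hw.symm c hc]
    exact hlt m n hm.le hmn t

theorem isFixedPt_of_modularTendsto [CompactSpace Y] (hT : IsModularContraction w k c₀ T)
    (hw : IsConvexModularConeMetric w) (hk0 : 0 < k) (hk1 : k < 1) (hc₀ : ∀ t, 0 < c₀ t)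
    {x z : X} (hz : ModularTendsto w (fun n => T^[n] x) z) : Function.IsFixedPt T z := by
  refine (hw.eq_of_forall_lt hc₀ fun c hc hcc₀ t => ?_).symm
  have hkc : ∀ t, 0 < ((1 - k) • c) t := fun t => mul_pos (sub_pos.mpr hk1) (hc t)
  obtain ⟨N₁, h₁⟩ := hz _ hkc
  obtain ⟨N₂, h₂⟩ := hz c hc
  obtain ⟨n, hn₁, hn₂⟩ : ∃ n, N₁ < n + 1 ∧ N₂ < n := ⟨N₁ + N₂ + 1, by omega, by omega⟩
  have hz₁ : w ((1 - k) • c) z (T^[n + 1] x) t < (1 - k) * c t := by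
    rw [hw.symm _ hkc]
    exact h₁ (n + 1) hn₁ t
  have hz₂ : w (k • c) (T^[n + 1] x) (T z) t < c t := by
    rw [Function.iterate_succ_apply']
    exact (hT c hc hcc₀ _ z t).trans_lt (h₂ n hn₂ t)
  calc w c z (T z) t
      ≤ (1 - k) * w ((1 - k) • c) z (T^[n + 1] x) t + k * w (k • c) (T^[n + 1] x) (T z) t :=
        hw.triangle (sub_pos.mpr hk1) hk0 (sub_add_cancel 1 k) hc _ _ _ t
    _ < (1 - k) * ((1 - k) * c t) + k * c t :=
        add_lt_add (mul_lt_mul_of_pos_left hz₁ (sub_pos.mpr hk1)) (mul_lt_mul_of_pos_left hz₂ hk0)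
    _ ≤ c t := by nlinarith [mul_pos (mul_pos hk0 (sub_pos.mpr hk1)) (hc t)]

theorem eq_of_isFixedPt [CompactSpace Y] (hT : IsModularContraction w k c₀ T)
    (hw : IsConvexModularConeMetric w) (hk0 : 0 < k) (hk1 : k < 1) (hc₀ : ∀ t, 0 < c₀ t)
    {z₁ z₂ : X} (h₁ : Function.IsFixedPt T z₁) (h₂ : Function.IsFixedPt T z₂) : z₁ = z₂ := by
  refine hw.eq_of_forall_lt hc₀ fun c hc hcc₀ t => ?_
  have h : w c z₁ z₂ t ≤ k * w c z₁ z₂ t :=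
    calc w c z₁ z₂ t ≤ k * w (k • c) (T z₁) (T z₂) t := by
          rw [h₁.eq, h₂.eq]
          exact hw.le_smul_mul hk0 hk1.le hc z₁ z₂ t
      _ ≤ k * w c z₁ z₂ t := by
          gcongr
          exact hT c hc hcc₀ z₁ z₂ t
  nlinarith [hc t]

theorem existsUnique_isFixedPt [CompactSpace Y] [Nonempty X] (hT : IsModularContraction w k c₀ T)
    (hw : IsConvexModularConeMetric w) (hk0 : 0 < k) (hk1 : k < 1) (hc₀ : ∀ t, 0 < c₀ t)
    (hcomplete : ∀ u : ℕ → X, IsModularCauchy w u → ∃ x, ModularTendsto w u x) :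
    ∃! z, Function.IsFixedPt T z := by
  obtain ⟨x⟩ := ‹Nonempty X›
  obtain ⟨z, hz⟩ := hcomplete _ (hT.isModularCauchy_iterate hw hk0 hk1 hc₀ x)
  have hfix := hT.isFixedPt_of_modularTendsto hw hk0 hk1 hc₀ hz
  exact ⟨z, hfix, fun y hy => hT.eq_of_isFixedPt hw hk0 hk1 hc₀ hy hfix⟩

end IsModularContraction

end ModularMetric

theorem convex_modular_cone_metric_contraction_fixed_point_general
    {Y : Type*} [TopologicalSpace Y] [CompactSpace Y]
    (P : Set C(Y, ℝ)) (hP : P = {f : C(Y, ℝ) | ∀ t : Y, 0 ≤ f t})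
    {X : Type*} [Nonempty X]
    (w : C(Y, ℝ) → X → X → C(Y, ℝ))
    (hw1 : ∀ x y : X, (∀ c ∈ interior P, w c x y = 0) ↔ x = y)
    (hw2 : ∀ c ∈ interior P, ∀ x y : X, w c x y = w c y x)
    (hw3 : ∀ c₁ ∈ interior P, ∀ c₂ ∈ interior P, ∀ x y z : X, ∀ t : Y,
      w (c₁ + c₂) x y t ≤
        (c₁ t / (c₁ t + c₂ t)) * w c₁ x z t
          + (c₂ t / (c₁ t + c₂ t)) * w c₂ z y t)
    -- completeness: every modular cone Cauchy sequence is modular cone convergent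
    (hcomplete : ∀ u : ℕ → X,
      (∀ c ∈ interior P, ∃ N : ℕ, ∀ n > N, ∀ m > N,
        c - w c (u n) (u m) ∈ interior P) →
      ∃ x : X, ∀ c ∈ interior P, ∃ N : ℕ, ∀ n > N,
        c - w c (u n) x ∈ interior P)
    (T : X → X) (k : ℝ) (hk0 : 0 < k) (hk1 : k < 1)
    (c₀ : C(Y, ℝ)) (hc₀ : c₀ ∈ interior P)
    (hT : ∀ c : C(Y, ℝ), c ∈ interior P → c₀ - c ∈ interior P →
      ∀ x y : X, w c x y - w (k • c) (T x) (T y) ∈ P) :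
    ∃! z : X, T z = z := by
  subst hP
  simp only [ContinuousMap.mem_interior_nonneg_iff, Set.mem_ofPred_eq, ContinuousMap.sub_apply,
    sub_pos, sub_nonneg] at hw1 hw2 hw3 hcomplete hc₀ hT
  exact IsModularContraction.existsUnique_isFixedPt hT ⟨hw1, hw2, hw3⟩ hk0 hk1 hc₀ hcomplete

/-- Let `Y` be a compact Hausdorff space, `E = C(Y, ℝ)` with the
sup-norm, `P` the cone of nonnegative functions, and `(X, w)` a complete convex
modular cone metric space.  If there exist `k ∈ (0,1)` and `c₀ ∈ interior P` such
that `T : X → X` satisfies `w (k • c) (T x) (T y) ⪯ w c x y` for all `c` with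
`0 ≪ c ≪ c₀` and all `x, y`, then `T` has a unique fixed point. -/
theorem convex_modular_cone_metric_contraction_fixed_point
    {Y : Type*} [TopologicalSpace Y] [CompactSpace Y] [T2Space Y]
    (P : Set C(Y, ℝ)) (hP : P = {f : C(Y, ℝ) | ∀ t : Y, 0 ≤ f t})
    {X : Type*} [Nonempty X]
    (w : C(Y, ℝ) → X → X → C(Y, ℝ))
    (hw1 : ∀ x y : X, (∀ c ∈ interior P, w c x y = 0) ↔ x = y)
    (hw2 : ∀ c ∈ interior P, ∀ x y : X, w c x y = w c y x)
    (hw3 : ∀ c₁ ∈ interior P, ∀ c₂ ∈ interior P, ∀ x y z : X, ∀ t : Y,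
      w (c₁ + c₂) x y t ≤
        (c₁ t / (c₁ t + c₂ t)) * w c₁ x z t
          + (c₂ t / (c₁ t + c₂ t)) * w c₂ z y t)
    -- completeness: every modular cone Cauchy sequence is modular cone convergent
    (hcomplete : ∀ u : ℕ → X,
      (∀ c ∈ interior P, ∃ N : ℕ, ∀ n > N, ∀ m > N,
        c - w c (u n) (u m) ∈ interior P) →
      ∃ x : X, ∀ c ∈ interior P, ∃ N : ℕ, ∀ n > N,
        c - w c (u n) x ∈ interior P)
    (T : X → X) (k : ℝ) (hk0 : 0 < k) (hk1 : k < 1)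
    (c₀ : C(Y, ℝ)) (hc₀ : c₀ ∈ interior P)
    (hT : ∀ c : C(Y, ℝ), c ∈ interior P → c₀ - c ∈ interior P →
      ∀ x y : X, w c x y - w (k • c) (T x) (T y) ∈ P) :
    ∃! z : X, T z = z :=
  convex_modular_cone_metric_contraction_fixed_point_general P hP w hw1 hw2 hw3 hcomplete T k hk0
    hk1 c₀ hc₀ hT
end

section
/- Let X = {(a,0) ∈ ℝ² : 1/2 ≤ a ≤ 1} ∪ {(0,b) ∈ ℝ² : 1/2 ≤ b ≤ 1} with the modular metric w given by w_λ((a₁,0),(a₂,0)) = 4|a₁−a₂|/(3λ), w_λ((0,b₁),(0,b₂)) = |b₁−b₂|/λ, and w_λ((a,0),(0,b)) = w_λ((0,b),(a,0)) = 4a/(3λ) + b/λ. Then every modular Cauchy sequence {xₙ} in X eventually lies in one of the two segments: either there exists N such that xₙ ∈ {(a,0) : 1/2 ≤ a ≤ 1} for all n > N, or there exists N such that xₙ ∈ {(0,b) : 1/2 ≤ b ≤ 1} for all n > N; consequently X is a complete modular metric space (every modular Cauchy sequence is modular convergent). -/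
/-!
A cross-segment modular distance is at least `4·(1/2)/3 + 1/2 = 7/6` at `λ = 1`, so a modular
Cauchy sequence cannot jump between the segments infinitely often. On each segment
`w_λ = (c/λ) · dist` for a constant `c > 0`, so the tail is Cauchy in the closed segment, and its
limit there is also a modular limit.
-/

/-- The set `X = {(a,0) : 1/2 ≤ a ≤ 1} ∪ {(0,b) : 1/2 ≤ b ≤ 1} ⊆ ℝ²`. -/
def exampleSet : Set (ℝ × ℝ) :=
  {p | (p.2 = 0 ∧ 1 / 2 ≤ p.1 ∧ p.1 ≤ 1) ∨ (p.1 = 0 ∧ 1 / 2 ≤ p.2 ∧ p.2 ≤ 1)}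

/-- The modular `w` of the counterexample: `w_λ((a₁,0),(a₂,0)) = 4|a₁−a₂|/(3λ)`,
`w_λ((0,b₁),(0,b₂)) = |b₁−b₂|/λ`, `w_λ((a,0),(0,b)) = w_λ((0,b),(a,0)) = 4a/(3λ) + b/λ`. -/
noncomputable def exampleModular (lam : ℝ) (p q : ℝ × ℝ) : ℝ :=
  if p.2 = 0 ∧ q.2 = 0 then 4 * |p.1 - q.1| / (3 * lam)
  else if p.1 = 0 ∧ q.1 = 0 then |p.2 - q.2| / lam
  else if p.2 = 0 then 4 * p.1 / (3 * lam) + q.2 / lam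
  else 4 * q.1 / (3 * lam) + p.2 / lam

open Filter Topology

theorem eventually_mem_or_eventually_mem_of_tendsto_zero {α : Type*} {d : α → α → ℝ}
    {A B : Set α} {δ : ℝ} (hδ : 0 < δ)
    (hAB : ∀ {p q}, p ∈ A → q ∈ B → δ ≤ d p q ∧ δ ≤ d q p) {u : ℕ → α} (hu : ∀ n, u n ∈ A ∪ B)
    (hd : Tendsto (fun p : ℕ × ℕ => d (u p.1) (u p.2)) atTop (𝓝 0)) :
    (∀ᶠ n in atTop, u n ∈ A) ∨ (∀ᶠ n in atTop, u n ∈ B) := by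
  obtain ⟨N, hN⟩ := eventually_atTop_prod_self'.1 (hd.eventually (gt_mem_nhds hδ))
  have hclose : ∀ n ≥ N, ¬δ ≤ d (u N) (u n) := fun n hn => not_le.2 (hN N le_rfl n hn)
  rcases hu N with hNA | hNB
  · refine .inl (eventually_atTop.2 ⟨N, fun n hn => ?_⟩)
    exact (hu n).resolve_right fun hnB => hclose n hn (hAB hNA hnB).1
  · refine .inr (eventually_atTop.2 ⟨N, fun n hn => ?_⟩)
    exact (hu n).resolve_left fun hnA => hclose n hn (hAB hnA hNB).2

theorem exists_mem_tendsto_of_eq_mul_dist {α : Type*} [PseudoMetricSpace α] [CompleteSpace α]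
    {S : Set α} (hS : IsClosed S) {w : ℝ → α → α → ℝ} {c : ℝ} (hc : c ≠ 0)
    (hw : ∀ lam {p q}, p ∈ S → q ∈ S → w lam p q = c / lam * dist p q) {u : ℕ → α}
    (huS : ∀ᶠ n in atTop, u n ∈ S)
    (hu : Tendsto (fun p : ℕ × ℕ => w 1 (u p.1) (u p.2)) atTop (𝓝 0)) :
    ∃ x ∈ S, ∀ lam, Tendsto (fun n => w lam (u n) x) atTop (𝓝 0) := by
  have hpairs : ∀ᶠ p : ℕ × ℕ in atTop, u p.1 ∈ S ∧ u p.2 ∈ S := by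
    rw [← prod_atTop_atTop_eq]
    exact huS.prod_mk huS
  have hcauchy : CauchySeq u := by
    refine cauchySeq_iff_tendsto_dist_atTop_0.2 ?_
    have h := hu.const_mul c⁻¹
    rw [mul_zero] at h
    refine h.congr' (hpairs.mono fun p ⟨hp₁, hp₂⟩ => ?_)
    rw [hw 1 hp₁ hp₂, div_one, inv_mul_cancel_left₀ hc]
  obtain ⟨x, hx⟩ := cauchySeq_tendsto_of_complete hcauchy
  have hxS : x ∈ S := hS.mem_of_tendsto hx huS
  refine ⟨x, hxS, fun lam => ?_⟩
  have h := (tendsto_iff_dist_tendsto_zero.1 hx).const_mul (c / lam)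
  rw [mul_zero] at h
  exact h.congr' (huS.mono fun n hn => (hw lam hn hxS).symm)

def horizontalSegment : Set (ℝ × ℝ) := {p | p.2 = 0 ∧ 1 / 2 ≤ p.1 ∧ p.1 ≤ 1}

def verticalSegment : Set (ℝ × ℝ) := {p | p.1 = 0 ∧ 1 / 2 ≤ p.2 ∧ p.2 ≤ 1}

theorem isClosed_horizontalSegment : IsClosed horizontalSegment :=
  (isClosed_eq continuous_snd continuous_const).inter
    ((isClosed_le continuous_const continuous_fst).inter
      (isClosed_le continuous_fst continuous_const))

theorem isClosed_verticalSegment : IsClosed verticalSegment :=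
  (isClosed_eq continuous_fst continuous_const).inter
    ((isClosed_le continuous_const continuous_snd).inter
      (isClosed_le continuous_snd continuous_const))

theorem exampleModular_of_mem_horizontalSegment (lam : ℝ) {p q : ℝ × ℝ}
    (hp : p ∈ horizontalSegment) (hq : q ∈ horizontalSegment) :
    exampleModular lam p q = 4 / 3 / lam * dist p q := by
  rw [exampleModular, if_pos ⟨hp.1, hq.1⟩, Prod.dist_eq, hp.1, hq.1, dist_self,
    max_eq_left dist_nonneg, Real.dist_eq]
  ring

theorem exampleModular_of_mem_verticalSegment (lam : ℝ) {p q : ℝ × ℝ}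
    (hp : p ∈ verticalSegment) (hq : q ∈ verticalSegment) :
    exampleModular lam p q = 1 / lam * dist p q := by
  have hp₂ : p.2 ≠ 0 := by linarith [hp.2.1]
  rw [exampleModular, if_neg fun h => hp₂ h.1, if_pos ⟨hp.1, hq.1⟩, Prod.dist_eq, hp.1, hq.1,
    dist_self, max_eq_right dist_nonneg, Real.dist_eq]
  ring

theorem le_exampleModular_one_of_mem_horizontalSegment_of_mem_verticalSegment {p q : ℝ × ℝ}
    (hp : p ∈ horizontalSegment) (hq : q ∈ verticalSegment) :
    7 / 6 ≤ exampleModular 1 p q ∧ 7 / 6 ≤ exampleModular 1 q p := by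
  obtain ⟨hp₂, hp₁, -⟩ := hp
  obtain ⟨hq₁, hq₂, -⟩ := hq
  have hp₁' : p.1 ≠ 0 := by linarith
  have hq₂' : q.2 ≠ 0 := by linarith
  simp only [exampleModular, hp₂, hq₁, hp₁', hq₂', and_false, false_and, if_false, if_true]
  constructor <;> linarith

/-- Every modular Cauchy sequence in `X = exampleSet` (with the
modular `exampleModular`) eventually lies in one of the two segments, and
consequently `X` is complete: every modular Cauchy sequence is modular convergent
to some point of `X`. -/
theorem exampleModular_cauchy_eventually_in_segment_and_complete
    (u : ℕ → ℝ × ℝ) (hu : ∀ n, u n ∈ exampleSet)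
    (hcauchy : ∀ lam : ℝ, 0 < lam →
      Filter.Tendsto (fun p : ℕ × ℕ => exampleModular lam (u p.1) (u p.2))
        Filter.atTop (nhds 0)) :
    ((∃ N : ℕ, ∀ n > N, (u n).2 = 0 ∧ 1 / 2 ≤ (u n).1 ∧ (u n).1 ≤ 1) ∨
     (∃ N : ℕ, ∀ n > N, (u n).1 = 0 ∧ 1 / 2 ≤ (u n).2 ∧ (u n).2 ≤ 1)) ∧
    (∃ x ∈ exampleSet, ∀ lam : ℝ, 0 < lam →
      Filter.Tendsto (fun n => exampleModular lam (u n) x)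
        Filter.atTop (nhds 0)) := by
  have h₁ := hcauchy 1 one_pos
  have exists_gt {S : Set (ℝ × ℝ)} (hS : ∀ᶠ n in atTop, u n ∈ S) : ∃ N, ∀ n > N, u n ∈ S :=
    (eventually_atTop.1 hS).imp fun N hN n hn => hN n hn.le
  rcases eventually_mem_or_eventually_mem_of_tendsto_zero (by norm_num)
    le_exampleModular_one_of_mem_horizontalSegment_of_mem_verticalSegment hu h₁ with hA | hB
  · obtain ⟨x, hx, hlim⟩ := exists_mem_tendsto_of_eq_mul_dist isClosed_horizontalSegment
      (by norm_num) exampleModular_of_mem_horizontalSegment hA h₁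
    exact ⟨.inl (exists_gt hA), x, .inl hx, fun lam _ => hlim lam⟩
  · obtain ⟨x, hx, hlim⟩ := exists_mem_tendsto_of_eq_mul_dist isClosed_verticalSegment
      one_ne_zero exampleModular_of_mem_verticalSegment hB h₁
    exact ⟨.inr (exists_gt hB), x, .inr hx, fun lam _ => hlim lam⟩
end

section
/- Let X = {(a,0) ∈ ℝ² : 1/2 ≤ a ≤ 1} ∪ {(0,b) ∈ ℝ² : 1/2 ≤ b ≤ 1} with the modular metric w given by w_λ((a₁,0),(a₂,0)) = 4|a₁−a₂|/(3λ), w_λ((0,b₁),(0,b₂)) = |b₁−b₂|/λ, and w_λ((a,0),(0,b)) = w_λ((0,b),(a,0)) = 4a/(3λ) + b/λ, and define T : X → X by T((a,0)) = (0,a) and T((0,b)) = (b/2, 0). Then T is a contraction with constant 3/4: for all x, y ∈ X and all λ > 0, w_λ(Tx, Ty) ≤ (3/4)·w_λ(x, y). -/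
/-- The map `T((a,0)) = (0,a)`, `T((0,b)) = (b/2, 0)`. -/
noncomputable def exampleMap (p : ℝ × ℝ) : ℝ × ℝ :=
  if p.2 = 0 then (0, p.1) else (p.2 / 2, 0)

/-!
`T` carries the horizontal arm onto the vertical one without changing coordinate distances, so it
trades the weight `4/(3λ)` for `1/λ` and scales `w` by exactly `3/4`; it carries the vertical arm
onto the horizontal one at half scale, scaling `w` by `2/3`. On a mixed pair the cross term
`4a/(3λ) + b/λ` becomes `a/λ + 2b/(3λ)`, which is `3/4` of it minus `b/(12λ) ≥ 0`.
-/

section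

variable {lam a b : ℝ}

lemma exampleMap_horizontal (a : ℝ) : exampleMap (a, 0) = (0, a) := by
  simp [exampleMap]

lemma exampleMap_vertical (hb : b ≠ 0) : exampleMap (0, b) = (b / 2, 0) := by
  simp [exampleMap, hb]

lemma exampleModular_horizontal (lam a a' : ℝ) :
    exampleModular lam (a, 0) (a', 0) = 4 * |a - a'| / (3 * lam) := by
  simp [exampleModular]

lemma exampleModular_vertical (lam b b' : ℝ) :
    exampleModular lam (0, b) (0, b') = |b - b'| / lam := by
  by_cases h : b = 0 ∧ b' = 0
  · simp [exampleModular, h.1, h.2]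
  · simp [exampleModular, h]

lemma exampleModular_horizontal_vertical (ha : a ≠ 0) (hb : b ≠ 0) :
    exampleModular lam (a, 0) (0, b) = 4 * a / (3 * lam) + b / lam := by
  simp [exampleModular, ha, hb]

lemma exampleModular_vertical_horizontal (ha : a ≠ 0) (hb : b ≠ 0) :
    exampleModular lam (0, b) (a, 0) = 4 * a / (3 * lam) + b / lam := by
  simp [exampleModular, ha, hb]

lemma cross_term_contraction (hlam : 0 < lam) (hb : 0 ≤ b) :
    4 * (b / 2) / (3 * lam) + a / lam ≤ 3 / 4 * (4 * a / (3 * lam) + b / lam) := by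
  have hgap : 3 / 4 * (4 * a / (3 * lam) + b / lam) - (4 * (b / 2) / (3 * lam) + a / lam) =
      b / (12 * lam) := by
    field_simp
    ring
  have : 0 ≤ b / (12 * lam) := by positivity
  linarith

lemma halved_distance_contraction (hlam : 0 < lam) (b b' : ℝ) :
    4 * |b / 2 - b' / 2| / (3 * lam) ≤ 3 / 4 * (|b - b'| / lam) := by
  rw [← sub_div, abs_div, abs_two]
  have hgap : 3 / 4 * (|b - b'| / lam) - 4 * (|b - b'| / 2) / (3 * lam) =
      |b - b'| / (12 * lam) := by
    field_simp
    ring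
  have : 0 ≤ |b - b'| / (12 * lam) := by positivity
  linarith

lemma exampleSet_cases {x : ℝ × ℝ} (hx : x ∈ exampleSet) :
    (∃ a, 0 < a ∧ x = (a, 0)) ∨ ∃ b, 0 < b ∧ x = (0, b) := by
  rcases hx with ⟨h2, h1, -⟩ | ⟨h1, h2, -⟩
  · exact Or.inl ⟨x.1, by linarith, Prod.ext rfl h2⟩
  · exact Or.inr ⟨x.2, by linarith, Prod.ext h1 rfl⟩

end

/-- On `X = exampleSet`, the map `T = exampleMap` is a contraction
with constant `3/4` for the modular `exampleModular`: for all `x, y ∈ X` and all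
`λ > 0`, `w_λ(Tx, Ty) ≤ (3/4) · w_λ(x, y)`. -/
theorem exampleMap_is_contraction :
    ∀ x ∈ exampleSet, ∀ y ∈ exampleSet, ∀ lam : ℝ, 0 < lam →
      exampleModular lam (exampleMap x) (exampleMap y) ≤
        3 / 4 * exampleModular lam x y := by
  intro x hx y hy lam hlam
  rcases exampleSet_cases hx with ⟨a, ha, rfl⟩ | ⟨b, hb, rfl⟩ <;>
    rcases exampleSet_cases hy with ⟨a', ha', rfl⟩ | ⟨b', hb', rfl⟩
  · rw [exampleMap_horizontal, exampleMap_horizontal, exampleModular_vertical,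
      exampleModular_horizontal]
    exact le_of_eq (by field_simp)
  · rw [exampleMap_horizontal, exampleMap_vertical hb'.ne', exampleModular_vertical_horizontal
      (by positivity) ha.ne', exampleModular_horizontal_vertical ha.ne' hb'.ne']
    exact cross_term_contraction hlam hb'.le
  · rw [exampleMap_vertical hb.ne', exampleMap_horizontal, exampleModular_horizontal_vertical
      (by positivity) ha'.ne', exampleModular_vertical_horizontal ha'.ne' hb.ne']
    exact cross_term_contraction hlam hb.le
  · rw [exampleMap_vertical hb.ne', exampleMap_vertical hb'.ne', exampleModular_horizontal,
      exampleModular_vertical]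
    exact halved_distance_contraction hlam b b'
end

section
/- Let X = {(a,0) ∈ ℝ² : 1/2 ≤ a ≤ 1} ∪ {(0,b) ∈ ℝ² : 1/2 ≤ b ≤ 1} and define T : X → X by T((a,0)) = (0,a) and T((0,b)) = (b/2, 0). Then T has no fixed point in X. (Together with the facts that w_λ((a₁,0),(a₂,0)) = 4|a₁−a₂|/(3λ), w_λ((0,b₁),(0,b₂)) = |b₁−b₂|/λ, w_λ((a,0),(0,b)) = 4a/(3λ) + b/λ defines a complete modular metric on X and that T is a 3/4-contraction for this w, this shows that the fixed point theorem of Mongkolkeha, Sintunavarat and Kumam for contractions in complete modular metric spaces is false.) -/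
theorem isFixedPt_exampleMap_iff {p : ℝ × ℝ} : Function.IsFixedPt exampleMap p ↔ p = 0 := by
  constructor
  · intro hfix
    obtain ⟨a, b⟩ := p
    unfold Function.IsFixedPt exampleMap at hfix
    split_ifs at hfix with hb
    · obtain ⟨ha, hab⟩ := Prod.mk.inj hfix
      simp_all
    · exact absurd (Prod.mk.inj hfix).2.symm hb
  · rintro rfl
    simp [Function.IsFixedPt, exampleMap]

theorem zero_notMem_exampleSet : (0 : ℝ × ℝ) ∉ exampleSet := by
  simp [exampleSet]

/-- The map `T = exampleMap` (given by `T((a,0)) = (0,a)` and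
`T((0,b)) = (b/2,0)`) has no fixed point in `X = exampleSet`. -/
theorem exampleMap_has_no_fixed_point :
    ∀ p ∈ exampleSet, exampleMap p ≠ p := by
  intro p hp hfix
  rw [isFixedPt_exampleMap_iff.mp hfix] at hp
  exact zero_notMem_exampleSet hp
end
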